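/- arXiv:1804.08515 — 2 statements merged into one kernel-verified Lean document; each statement's English description precedes it below -/
import Mathlib

section
/- Let (H, B) be a combinatorial Hopf algebra over ℝ with inverse-factorial character q normalized so that q(τ) = 1 for every τ ∈ B₁. Then for every x ∈ B, q(x) is a nonnegative rational number. -/
open TensorProduct

/-- Convolution product of two linear forms on a coalgebra. -/
noncomputable def conv {k H : Type*} [CommSemiring k] [Semiring H] [Bialgebra k H]
    (f g : H →ₗ[k] k) : H →ₗ[k] k :=
  (LinearMap.mul' k k) ∘ₗ (TensorProduct.map f g) ∘ₗ Coalgebra.comul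

/-- A grading making a Hopf (bi)algebra graded and connected: the product and the coproduct
respect the grading and the degree-zero part is spanned by the unit. -/
structure GradedConnected (k H : Type*) [CommSemiring k] [Semiring H] [Bialgebra k H] where
  grading : ℕ → Submodule k H
  internal : DirectSum.IsInternal grading
  connected : grading 0 = Submodule.span k {1}
  mul_mem : ∀ {p q : ℕ} {x y : H}, x ∈ grading p → y ∈ grading q → x * y ∈ grading (p + q)
  comul_mem : ∀ {n : ℕ} {x : H}, x ∈ grading n →
    Coalgebra.comul (R := k) x ∈
      ⨆ p ∈ Finset.range (n + 1),
        LinearMap.range (TensorProduct.mapIncl (grading p) (grading (n - p)))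


/-- A combinatorial Hopf algebra over `ℝ`: a graded connected Hopf algebra together with a
basis `b` of homogeneous elements whose graded pieces have at most exponentially growing
(finite) cardinality, and whose structure constants for the product and the coproduct are
nonnegative integers. -/
structure CombinatorialHopf (H : Type*) [Ring H] [HopfAlgebra ℝ H] (ι : Type*) extends
    GradedConnected ℝ H where
  b : Module.Basis ι ℝ H
  deg : ι → ℕ
  homog : ∀ i : ι, b i ∈ grading (deg i)
  fin : ∀ n : ℕ, Finite {i : ι // deg i = n}
  growth : ∃ B C : ℝ, 0 < B ∧ 0 < C ∧
    ∀ n : ℕ, (Nat.card {i : ι // deg i = n} : ℝ) ≤ B * C ^ n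
  mul_int : ∀ i j ρ : ι, ∃ m : ℕ, (b.repr (b i * b j)) ρ = (m : ℝ)
  comul_int : ∀ ρ i j : ι, ∃ m : ℕ,
    ((b.tensorProduct b).repr (Coalgebra.comul (R := ℝ) (b ρ))) (i, j) = (m : ℝ)

/-- A combinatorial Hopf algebra is non-degenerate if the basis elements which are primitive
are exactly those of degree one (`B ∩ Prim(H) = B₁`). -/
def CombinatorialHopf.Nondegenerate {H : Type*} [Ring H] [HopfAlgebra ℝ H] {ι : Type*}
    (Ch : CombinatorialHopf H ι) : Prop :=
  ∀ i : ι,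
    (Coalgebra.comul (R := ℝ) (Ch.b i) = Ch.b i ⊗ₜ[ℝ] 1 + 1 ⊗ₜ[ℝ] Ch.b i) ↔ Ch.deg i = 1

/-- A `γ`-regular `H`-rough path for a combinatorial Hopf algebra `(H, B)`. -/
def IsRoughPath {H : Type*} [CommRing H] [HopfAlgebra ℝ H] {ι : Type*}
    (Ch : CombinatorialHopf H ι) (γ : ℝ) (X : ℝ → ℝ → (H →ₗ[ℝ] ℝ)) : Prop :=
  (∀ s t : ℝ, X s t 1 = 1) ∧
  (∀ s t : ℝ, ∀ x y : H, X s t (x * y) = X s t x * X s t y) ∧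
  (∀ s u t : ℝ, ∀ x : H, conv (X s u) (X u t) x = X s t x) ∧
  (∀ i : ι, ∃ C : ℝ, ∀ s t : ℝ, s ≠ t →
    |X s t (Ch.b i)| ≤ C * |t - s| ^ (γ * (Ch.deg i : ℝ)))

/-- A `γ`-regular `N`-truncated `H`-rough path: the defining properties are only required
in degrees at most `N`. -/
def IsTruncRoughPath {H : Type*} [CommRing H] [HopfAlgebra ℝ H] {ι : Type*}
    (Ch : CombinatorialHopf H ι) (γ : ℝ) (N : ℕ) (X : ℝ → ℝ → (H →ₗ[ℝ] ℝ)) : Prop :=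
  (∀ s t : ℝ, X s t 1 = 1) ∧
  (∀ s t : ℝ, ∀ p q : ℕ, p + q ≤ N → ∀ x ∈ Ch.grading p, ∀ y ∈ Ch.grading q,
    X s t (x * y) = X s t x * X s t y) ∧
  (∀ s u t : ℝ, ∀ n : ℕ, n ≤ N → ∀ x ∈ Ch.grading n,
    conv (X s u) (X u t) x = X s t x) ∧
  (∀ i : ι, Ch.deg i ≤ N → ∃ C : ℝ, ∀ s t : ℝ, s ≠ t →
    |X s t (Ch.b i)| ≤ C * |t - s| ^ (γ * (Ch.deg i : ℝ)))

/-! Induction on the degree. Expand `q ⋆ q = 2ⁿ q` on a basis element `b ρ` of degree `n ≥ 2`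
in the tensor basis. By the counit identities, the summands whose left factor has degree zero add
up to `q (b ρ)`, and so do those whose right factor has degree zero (`q` agrees with the counit in
degree zero). Hence `(2ⁿ - 2) q (b ρ)` is a sum of nonnegative integer structure constants times
values of `q` in lower degrees. In degree zero, `b ρ = c • 1` where `c` is the coefficient of
`b ρ` in `b ρ * b ρ`. -/

namespace GradedConnected

variable {k H : Type*} [CommSemiring k] [Semiring H] [Bialgebra k H] (G : GradedConnected k H)

noncomputable def proj (n : ℕ) : H →ₗ[k] H :=
  (G.grading n).subtype ∘ₗ (DirectSum.component k ℕ (fun m => G.grading m) n) ∘ₗ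
    (LinearEquiv.ofBijective (DirectSum.coeLinearMap G.grading) G.internal).symm.toLinearMap

theorem proj_of_mem {n : ℕ} {x : H} (hx : x ∈ G.grading n) : G.proj n x = x := by
  simp only [proj, LinearMap.comp_apply, LinearEquiv.coe_coe, ← DirectSum.apply_eq_component,
    G.internal.ofBijective_coeLinearMap_of_mem hx, Submodule.subtype_apply]

theorem proj_of_mem_of_ne {m n : ℕ} (hmn : m ≠ n) {x : H} (hx : x ∈ G.grading m) :
    G.proj n x = 0 := by
  simp only [proj, LinearMap.comp_apply, LinearEquiv.coe_coe, ← DirectSum.apply_eq_component,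
    G.internal.ofBijective_coeLinearMap_of_mem_ne hmn hx, map_zero]

end GradedConnected

theorem Module.Basis.apply_eq_sum_repr {R M N κ : Type*} [CommSemiring R] [AddCommMonoid M]
    [Module R M] [AddCommMonoid N] [Module R N] (B : Module.Basis κ R M) (F : M →ₗ[R] N) (z : M) :
    F z = ∑ p ∈ (B.repr z).support, B.repr z p • F (B p) := by
  conv_lhs => rw [← B.linearCombination_repr z]
  rw [Finsupp.apply_linearCombination, Finsupp.linearCombination_apply, Finsupp.sum]
  rfl

namespace CombinatorialHopf

variable {H : Type*} [Ring H] [HopfAlgebra ℝ H] {ι : Type*} (Ch : CombinatorialHopf H ι)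

theorem coord_proj_deg (i : ι) : Ch.b.coord i ∘ₗ Ch.proj (Ch.deg i) = Ch.b.coord i := by
  refine Ch.b.ext fun j => ?_
  by_cases hji : Ch.deg j = Ch.deg i
  · simp [Ch.proj_of_mem (hji ▸ Ch.homog j)]
  · have hne : j ≠ i := fun h => hji (h ▸ rfl)
    simp [Ch.proj_of_mem_of_ne hji (Ch.homog j), Module.Basis.repr_self, hne]

theorem deg_eq_of_repr_ne_zero {n : ℕ} {x : H} (hx : x ∈ Ch.grading n) {i : ι}
    (hi : Ch.b.repr x i ≠ 0) : Ch.deg i = n := by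
  by_contra hne
  apply hi
  rw [← Ch.b.coord_apply, ← Ch.coord_proj_deg, LinearMap.comp_apply,
    Ch.proj_of_mem_of_ne (Ne.symm hne) hx, map_zero]

noncomputable def comulCoeff (ρ : ι) : ι × ι →₀ ℝ :=
  (Ch.b.tensorProduct Ch.b).repr (Coalgebra.comul (R := ℝ) (Ch.b ρ))

theorem deg_add_deg_of_mem_support {ρ : ι} {p : ι × ι} (hp : p ∈ (Ch.comulCoeff ρ).support) :
    Ch.deg p.1 + Ch.deg p.2 = Ch.deg ρ := by
  obtain ⟨i, j⟩ := p
  by_contra hne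
  have hker : (⨆ m ∈ Finset.range (Ch.deg ρ + 1), LinearMap.range
      (TensorProduct.mapIncl (Ch.grading m) (Ch.grading (Ch.deg ρ - m)))) ≤
      LinearMap.ker ((Ch.b.tensorProduct Ch.b).coord (i, j)) := by
    refine iSup₂_le fun m hm => LinearMap.range_le_ker_iff.mpr (TensorProduct.ext' ?_)
    rintro ⟨x, hx⟩ ⟨y, hy⟩
    have hm : m ≤ Ch.deg ρ := Nat.lt_succ_iff.mp (Finset.mem_range.mp hm)
    suffices Ch.b.repr y j = 0 ∨ Ch.b.repr x i = 0 by
      simpa [TensorProduct.mapIncl, Module.Basis.tensorProduct_repr_tmul_apply] using this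
    by_contra! h
    exact hne (by rw [Ch.deg_eq_of_repr_ne_zero hx h.2, Ch.deg_eq_of_repr_ne_zero hy h.1]; omega)
  exact (Finsupp.mem_support_iff.mp hp) (hker (Ch.comul_mem (Ch.homog ρ)))

theorem apply_comul_eq_sum (F : H ⊗[ℝ] H →ₗ[ℝ] ℝ) (ρ : ι) :
    F (Coalgebra.comul (R := ℝ) (Ch.b ρ)) =
      ∑ p ∈ (Ch.comulCoeff ρ).support, Ch.comulCoeff ρ p * F (Ch.b p.1 ⊗ₜ Ch.b p.2) := by
  rw [Module.Basis.apply_eq_sum_repr (Ch.b.tensorProduct Ch.b) F]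
  simp only [comulCoeff, Module.Basis.tensorProduct_apply', smul_eq_mul]

theorem conv_apply_basis (f g : H →ₗ[ℝ] ℝ) (ρ : ι) :
    conv f g (Ch.b ρ) =
      ∑ p ∈ (Ch.comulCoeff ρ).support, Ch.comulCoeff ρ p * (f (Ch.b p.1) * g (Ch.b p.2)) := by
  change (LinearMap.mul' ℝ ℝ ∘ₗ TensorProduct.map f g) (Coalgebra.comul (R := ℝ) (Ch.b ρ)) = _
  rw [Ch.apply_comul_eq_sum]
  simp only [LinearMap.comp_apply, TensorProduct.map_tmul, LinearMap.mul'_apply]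

theorem sum_counit_mul (φ : H →ₗ[ℝ] ℝ) (ρ : ι) :
    ∑ p ∈ (Ch.comulCoeff ρ).support,
      Ch.comulCoeff ρ p * (Coalgebra.counit (R := ℝ) (Ch.b p.1) * φ (Ch.b p.2)) = φ (Ch.b ρ) := by
  have h := Ch.apply_comul_eq_sum
    (φ ∘ₗ (TensorProduct.lid ℝ H).toLinearMap ∘ₗ (Coalgebra.counit (R := ℝ)).rTensor H) ρ
  simp only [LinearMap.comp_apply, LinearEquiv.coe_coe, Coalgebra.rTensor_counit_comul,
    LinearMap.rTensor_tmul, TensorProduct.lid_tmul, map_smul, smul_eq_mul] at h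
  simpa using h.symm

theorem sum_mul_counit (φ : H →ₗ[ℝ] ℝ) (ρ : ι) :
    ∑ p ∈ (Ch.comulCoeff ρ).support,
      Ch.comulCoeff ρ p * (φ (Ch.b p.1) * Coalgebra.counit (R := ℝ) (Ch.b p.2)) = φ (Ch.b ρ) := by
  have h := Ch.apply_comul_eq_sum
    (φ ∘ₗ (TensorProduct.rid ℝ H).toLinearMap ∘ₗ (Coalgebra.counit (R := ℝ)).lTensor H) ρ
  simp only [LinearMap.comp_apply, LinearEquiv.coe_coe, Coalgebra.lTensor_counit_comul,
    LinearMap.lTensor_tmul, TensorProduct.rid_tmul, map_smul, smul_eq_mul] at h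
  simpa [mul_comm] using h.symm

theorem exists_nat_eq_smul_one_of_deg_eq_zero {i : ι} (hi : Ch.deg i = 0) :
    ∃ c : ℕ, Ch.b i = (c : ℝ) • 1 := by
  obtain ⟨a, ha⟩ := Submodule.mem_span_singleton.mp (Ch.connected ▸ hi ▸ Ch.homog i)
  obtain ⟨c, hc⟩ := Ch.mul_int i i i
  have hsq : Ch.b i * Ch.b i = a • Ch.b i := by rw [← ha, smul_mul_assoc, one_mul]
  refine ⟨c, ?_⟩
  rw [← hc, hsq, map_smul]
  simpa [Module.Basis.repr_self] using ha.symm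

theorem apply_eq_counit_of_deg_eq_zero {φ : H →ₗ[ℝ] ℝ} (hφ : φ 1 = 1) {i : ι}
    (hi : Ch.deg i = 0) : φ (Ch.b i) = Coalgebra.counit (R := ℝ) (Ch.b i) := by
  obtain ⟨c, hc⟩ := Ch.exists_nat_eq_smul_one_of_deg_eq_zero hi
  simp [hc, hφ]

noncomputable def degPart (φ : H →ₗ[ℝ] ℝ) (n : ℕ) : H →ₗ[ℝ] ℝ :=
  Ch.b.constr ℝ fun j => if Ch.deg j = n then φ (Ch.b j) else 0

theorem sum_deg_fst_eq_zero {φ : H →ₗ[ℝ] ℝ} (hφ : φ 1 = 1) (ψ : H →ₗ[ℝ] ℝ) (ρ : ι) :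
    ∑ p ∈ (Ch.comulCoeff ρ).support with Ch.deg p.1 = 0,
      Ch.comulCoeff ρ p * (φ (Ch.b p.1) * ψ (Ch.b p.2)) = ψ (Ch.b ρ) := by
  -- Truncating `ψ` to degree `deg ρ` keeps exactly the summands with `deg p.1 = 0`.
  have h := Ch.sum_counit_mul (Ch.degPart ψ (Ch.deg ρ)) ρ
  simp only [degPart, Module.Basis.constr_basis, ↓reduceIte] at h
  rw [← h, Finset.sum_filter]
  refine Finset.sum_congr rfl fun p hp => ?_
  have hdeg := Ch.deg_add_deg_of_mem_support hp
  by_cases h1 : Ch.deg p.1 = 0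
  · rw [if_pos h1, if_pos (by omega), Ch.apply_eq_counit_of_deg_eq_zero hφ h1]
  · rw [if_neg h1, if_neg (by omega), mul_zero, mul_zero]

theorem sum_deg_snd_eq_zero {ψ : H →ₗ[ℝ] ℝ} (hψ : ψ 1 = 1) (φ : H →ₗ[ℝ] ℝ) (ρ : ι) :
    ∑ p ∈ (Ch.comulCoeff ρ).support with Ch.deg p.2 = 0,
      Ch.comulCoeff ρ p * (φ (Ch.b p.1) * ψ (Ch.b p.2)) = φ (Ch.b ρ) := by
  have h := Ch.sum_mul_counit (Ch.degPart φ (Ch.deg ρ)) ρ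
  simp only [degPart, Module.Basis.constr_basis, ↓reduceIte] at h
  rw [← h, Finset.sum_filter]
  refine Finset.sum_congr rfl fun p hp => ?_
  have hdeg := Ch.deg_add_deg_of_mem_support hp
  by_cases h2 : Ch.deg p.2 = 0
  · rw [if_pos h2, if_pos (by omega), Ch.apply_eq_counit_of_deg_eq_zero hψ h2]
  · rw [if_neg h2, if_neg (by omega), zero_mul, mul_zero]

theorem two_pow_sub_two_mul_eq_sum {q : H →ₗ[ℝ] ℝ} (hq1 : q 1 = 1) {ρ : ι} (hρ : Ch.deg ρ ≠ 0)
    (hconv : conv q q (Ch.b ρ) = 2 ^ Ch.deg ρ * q (Ch.b ρ)) :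
    (2 ^ Ch.deg ρ - 2) * q (Ch.b ρ) =
      ∑ p ∈ (Ch.comulCoeff ρ).support with Ch.deg p.1 ≠ 0 ∧ Ch.deg p.2 ≠ 0,
        Ch.comulCoeff ρ p * (q (Ch.b p.1) * q (Ch.b p.2)) := by
  set S := (Ch.comulCoeff ρ).support
  set t : ι × ι → ℝ := fun p => Ch.comulCoeff ρ p * (q (Ch.b p.1) * q (Ch.b p.2))
  have hsplit : ∑ p ∈ S, t p = ∑ p ∈ S with Ch.deg p.1 = 0, t p +
      ∑ p ∈ S with Ch.deg p.2 = 0, t p + ∑ p ∈ S with Ch.deg p.1 ≠ 0 ∧ Ch.deg p.2 ≠ 0, t p := by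
    simp only [Finset.sum_filter, ← Finset.sum_add_distrib]
    refine Finset.sum_congr rfl fun p hp => ?_
    have := Ch.deg_add_deg_of_mem_support hp
    split_ifs <;> first | omega | ring
  rw [Ch.conv_apply_basis, hsplit, Ch.sum_deg_fst_eq_zero hq1, Ch.sum_deg_snd_eq_zero hq1] at hconv
  linarith

theorem apply_basis_mem_range_nnratCast {q : H →ₗ[ℝ] ℝ} (hq1 : q 1 = 1)
    (hqB1 : ∀ i : ι, Ch.deg i = 1 → q (Ch.b i) = 1)
    (hqconv : ∀ i : ι, conv q q (Ch.b i) = 2 ^ Ch.deg i * q (Ch.b i)) (ρ : ι) :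
    q (Ch.b ρ) ∈ (NNRat.castHom ℝ).rangeS := by
  induction hρ : Ch.deg ρ using Nat.strong_induction_on generalizing ρ with
  | _ n ih =>
  match n, hρ with
  | 0, hρ =>
    obtain ⟨c, hc⟩ := Ch.exists_nat_eq_smul_one_of_deg_eq_zero hρ
    simp [hc, hq1]
  | 1, hρ => simp [hqB1 ρ hρ]
  | n + 2, hρ =>
    have hsum : (∑ p ∈ (Ch.comulCoeff ρ).support with Ch.deg p.1 ≠ 0 ∧ Ch.deg p.2 ≠ 0,
        Ch.comulCoeff ρ p * (q (Ch.b p.1) * q (Ch.b p.2))) ∈ (NNRat.castHom ℝ).rangeS := by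
      refine sum_mem fun p hp => ?_
      obtain ⟨hp, hp1, hp2⟩ := Finset.mem_filter.mp hp
      obtain ⟨m, hm⟩ := Ch.comul_int ρ p.1 p.2
      have hd := Ch.deg_add_deg_of_mem_support hp
      exact mul_mem (hm ▸ natCast_mem _ m) (mul_mem (ih _ (by omega) _ rfl) (ih _ (by omega) _ rfl))
    have hrec := Ch.two_pow_sub_two_mul_eq_sum hq1 (by omega) (hqconv ρ)
    rw [hρ] at hrec
    have hpos : (2 : ℝ) ^ (n + 2) - 2 ≠ 0 := by
      have : (1 : ℝ) ≤ 2 ^ n := one_le_pow₀ one_le_two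
      rw [pow_add]
      linarith
    rw [(eq_inv_mul_iff_mul_eq₀ hpos).mpr hrec]
    refine mul_mem ⟨((2 ^ (n + 2) - 2 : ℕ) : ℚ≥0)⁻¹, ?_⟩ hsum
    rw [map_inv₀, map_natCast, Nat.cast_sub (Nat.le_self_pow (by omega) 2)]
    push_cast
    rfl

end CombinatorialHopf

/-- The inverse-factorial character of a combinatorial Hopf algebra takes
nonnegative rational values on all basis elements. -/
theorem stmt7 {H : Type*} [Ring H] [HopfAlgebra ℝ H] {ι : Type*}
    (Ch : CombinatorialHopf H ι)
    (q : H →ₗ[ℝ] ℝ) (hq1 : q 1 = 1)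
    (hqB1 : ∀ i : ι, Ch.deg i = 1 → q (Ch.b i) = 1)
    (hqconv : ∀ n : ℕ, ∀ x ∈ Ch.grading n, conv q q x = 2 ^ n * q x) :
    ∀ i : ι, ∃ r : ℚ, 0 ≤ r ∧ q (Ch.b i) = (r : ℝ) := by
  intro i
  obtain ⟨r, hr⟩ := Ch.apply_basis_mem_range_nnratCast hq1 hqB1
    (fun j => hqconv _ _ (Ch.homog j)) i
  exact ⟨r, r.cast_nonneg, by rw [← hr]; rfl⟩
end

section
/- Let H and H' be graded connected Hopf algebras over ℝ with homogeneous bases B and B' respectively, let Φ : H → H' be a Hopf algebra morphism preserving the degree with α = α' ∘ Φ|_{H₁}, and let γ ∈ (0,1] with N := ⌊1/γ⌋. Let q_γ : H → ℝ be the linear map determined by q_γ(1) = 1, q_γ|_{H₁} = α, q_γ(x) = 2^{−|x|}(q_γ ⋆ q_γ)(x) for homogeneous x with 2 ≤ |x| ≤ N, and q_γ(x) = 2^{−γ|x|}(q_γ ⋆ q_γ)(x) for homogeneous x with |x| ≥ N+1, and let q'_γ be defined analogously on H' from α'. Then q_γ = q'_γ ∘ Φ. -/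
open TensorProduct

/-!
Put `q = q'_γ ∘ Φ`, which is again a solution of the recursion on `H` because `Φ` is a
degree-preserving coalgebra map, and show `d = q_γ - q` vanishes by induction on the degree. If
`d` vanishes below degree `n`, then in `(q_γ ⋆ q_γ - q ⋆ q)(x)` for `x ∈ H_n` every term of `Δ x`
of bidegree `(p, n - p)` with `0 < p < n` cancels, while the extreme terms `1 ⊗ x` and `x ⊗ 1`
contribute `d x` each. The recursions thus give `d x = 2 c d x` with `c = 2^{-s}`, `s > 1`, so
`d x = 0`.
-/

open WithConv

section Convolution

variable {k H : Type*} [CommSemiring k] [Semiring H] [Bialgebra k H]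

lemma conv_eq_ofConv_mul (f g : H →ₗ[k] k) : conv f g = (toConv f * toConv g).ofConv := rfl

lemma toConv_counit : toConv (Coalgebra.counit : H →ₗ[k] k) = 1 := by
  ext; simp

lemma conv_counit_left (f : H →ₗ[k] k) : conv Coalgebra.counit f = f := by
  rw [conv_eq_ofConv_mul, toConv_counit, one_mul, ofConv_toConv]

lemma conv_counit_right (f : H →ₗ[k] k) : conv f Coalgebra.counit = f := by
  rw [conv_eq_ofConv_mul, toConv_counit, mul_one, ofConv_toConv]

lemma conv_comp_coalgHom {H' : Type*} [Semiring H'] [Bialgebra k H'] (Φ : H →ₗc[k] H')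
    (f g : H' →ₗ[k] k) :
    conv (f ∘ₗ Φ.toLinearMap) (g ∘ₗ Φ.toLinearMap) = conv f g ∘ₗ Φ.toLinearMap :=
  (LinearMap.convMul_comp_coalgHom_distrib (toConv f) (toConv g) Φ).symm

end Convolution

lemma conv_self_sub_conv_self {k H : Type*} [CommRing k] [Semiring H] [Bialgebra k H]
    (f g : H →ₗ[k] k) : conv f f - conv g g = conv (f - g) f + conv g (f - g) := by
  simp only [conv_eq_ofConv_mul, ← ofConv_sub, ← ofConv_add, toConv_sub]
  rw [sub_mul, mul_sub, sub_add_sub_cancel]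

namespace GradedConnected

section CommSemiring

variable {k H : Type*} [CommSemiring k] [Semiring H] [Bialgebra k H] (G : GradedConnected k H)

lemma linearMap_ext {M : Type*} [AddCommMonoid M] [Module k M] {f g : H →ₗ[k] M}
    (h : ∀ n, ∀ x ∈ G.grading n, f x = g x) : f = g := by
  ext x
  have hx : x ∈ ⨆ n, G.grading n := by
    rw [G.internal.submodule_iSup_eq_top]; trivial
  refine Submodule.iSup_induction _ (motive := fun y => f y = g y) hx h (by simp) ?_
  intro a b ha hb
  rw [map_add, map_add, ha, hb]

lemma apply_eq_zero_of_mem_zero {f : H →ₗ[k] k} (hf : f 1 = 0) {x : H} (hx : x ∈ G.grading 0) :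
    f x = 0 := by
  rw [G.connected, Submodule.mem_span_singleton] at hx
  obtain ⟨c, rfl⟩ := hx
  rw [map_smul, hf, smul_zero]

lemma conv_apply_eq_zero {f g : H →ₗ[k] k} {n : ℕ} {x : H} (hx : x ∈ G.grading n)
    (h : ∀ p ≤ n, (∀ a ∈ G.grading p, f a = 0) ∨ ∀ b ∈ G.grading (n - p), g b = 0) :
    conv f g x = 0 := by
  suffices hle : (⨆ p ∈ Finset.range (n + 1),
      LinearMap.range (mapIncl (G.grading p) (G.grading (n - p)))) ≤
      LinearMap.ker (LinearMap.mul' k k ∘ₗ map f g) from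
    hle (G.comul_mem hx)
  refine iSup₂_le fun p hp => LinearMap.range_le_ker_iff.mpr (TensorProduct.ext' fun a b => ?_)
  have hpn : p ≤ n := Nat.lt_succ_iff.mp (Finset.mem_range.mp hp)
  rcases h p hpn with hf | hg
  · simp [hf a a.2]
  · simp [hg b b.2]

end CommSemiring

section CommRing

variable {k H : Type*} [CommRing k] [Semiring H] [Bialgebra k H] (G : GradedConnected k H)

lemma conv_apply_eq_right {f g : H →ₗ[k] k} (hf : f 1 = 1) {n : ℕ}
    (hg : ∀ m < n, ∀ y ∈ G.grading m, g y = 0) {x : H} (hx : x ∈ G.grading n) :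
    conv f g x = g x := by
  have hf' : (f - Coalgebra.counit : H →ₗ[k] k) 1 = 0 := by simp [hf]
  have hzero : conv (f - Coalgebra.counit) g x = 0 := by
    refine G.conv_apply_eq_zero hx fun p hp => ?_
    rcases Nat.eq_zero_or_pos p with rfl | hp0
    · exact .inl fun a ha => G.apply_eq_zero_of_mem_zero hf' ha
    · exact .inr (hg (n - p) (by omega))
  rwa [conv_eq_ofConv_mul, toConv_sub, sub_mul, ofConv_sub, ← conv_eq_ofConv_mul,
    ← conv_eq_ofConv_mul, conv_counit_left, LinearMap.sub_apply, sub_eq_zero] at hzero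

lemma conv_apply_eq_left {f g : H →ₗ[k] k} (hf : f 1 = 1) {n : ℕ}
    (hg : ∀ m < n, ∀ y ∈ G.grading m, g y = 0) {x : H} (hx : x ∈ G.grading n) :
    conv g f x = g x := by
  have hf' : (f - Coalgebra.counit : H →ₗ[k] k) 1 = 0 := by simp [hf]
  have hzero : conv g (f - Coalgebra.counit) x = 0 := by
    refine G.conv_apply_eq_zero hx fun p hp => ?_
    rcases Nat.lt_or_ge p n with hpn | hpn
    · exact .inl (hg p hpn)
    · refine .inr fun b hb => G.apply_eq_zero_of_mem_zero hf' ?_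
      rwa [Nat.sub_eq_zero_of_le hpn] at hb
  rwa [conv_eq_ofConv_mul, toConv_sub, mul_sub, ofConv_sub, ← conv_eq_ofConv_mul,
    ← conv_eq_ofConv_mul, conv_counit_right, LinearMap.sub_apply, sub_eq_zero] at hzero

lemma conv_self_sub_conv_self_apply {f g : H →ₗ[k] k} (hf : f 1 = 1) (hg : g 1 = 1) {n : ℕ}
    (hfg : ∀ m < n, ∀ y ∈ G.grading m, f y = g y) {x : H} (hx : x ∈ G.grading n) :
    conv f f x - conv g g x = 2 * (f x - g x) := by
  have hd : ∀ m < n, ∀ y ∈ G.grading m, (f - g) y = 0 := fun m hm y hy => by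
    rw [LinearMap.sub_apply, hfg m hm y hy, sub_self]
  rw [← LinearMap.sub_apply, conv_self_sub_conv_self, LinearMap.add_apply,
    G.conv_apply_eq_left hf hd hx, G.conv_apply_eq_right hg hd hx, LinearMap.sub_apply, two_mul]

end CommRing

theorem linearMap_eq_of_conv_recursion {k H : Type*} [Field k] [Semiring H] [Bialgebra k H]
    (G : GradedConnected k H) {f g : H →ₗ[k] k} (hf : f 1 = 1) (hg : g 1 = 1)
    (h1 : ∀ x ∈ G.grading 1, f x = g x)
    (hrec : ∀ n, 2 ≤ n → ∃ c : k, 2 * c ≠ 1 ∧ (∀ x ∈ G.grading n, f x = c * conv f f x) ∧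
      ∀ x ∈ G.grading n, g x = c * conv g g x) :
    f = g := by
  refine G.linearMap_ext fun n => ?_
  induction n using Nat.strong_induction_on with
  | _ n IH =>
  match n, IH with
  | 0, _ =>
    intro x hx
    have hfg : (f - g) 1 = 0 := by rw [LinearMap.sub_apply, hf, hg, sub_self]
    exact sub_eq_zero.mp (G.apply_eq_zero_of_mem_zero hfg hx)
  | 1, _ => exact h1
  | n + 2, IH =>
    intro x hx
    obtain ⟨c, hc, hfx, hgx⟩ := hrec (n + 2) (by omega)
    have hconv := G.conv_self_sub_conv_self_apply hf hg IH hx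
    have hfix : (1 - 2 * c) * (f x - g x) = 0 := by
      linear_combination hfx x hx - hgx x hx + c * hconv
    exact sub_eq_zero.mp ((mul_eq_zero.mp hfix).resolve_left (sub_ne_zero.mpr hc.symm))

end GradedConnected

lemma two_mul_two_rpow_neg_ne_one {s : ℝ} (hs : 1 < s) : 2 * (2 : ℝ) ^ (-s) ≠ 1 := by
  have hlt : (2 : ℝ) ^ (1 - s) < 1 := Real.rpow_lt_one_of_one_lt_of_neg one_lt_two (by linarith)
  rw [Real.rpow_sub two_pos, Real.rpow_one, div_eq_mul_inv, ← Real.rpow_neg two_pos.le] at hlt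
  exact hlt.ne

lemma one_lt_mul_of_floor_one_div_lt {γ : ℝ} (hγ : 0 < γ) {n : ℕ} (hn : ⌊1 / γ⌋₊ < n) :
    1 < γ * n := by
  have := Nat.lt_of_floor_lt hn
  rwa [div_lt_iff₀ hγ, mul_comm] at this

theorem stmt9_general {H H' : Type*} [Ring H] [HopfAlgebra ℝ H] [Ring H'] [HopfAlgebra ℝ H']
    (G : GradedConnected ℝ H) (G' : GradedConnected ℝ H')
    (Φ : H →ₐc[ℝ] H')
    (hdeg : ∀ n : ℕ, ∀ x ∈ G.grading n, Φ x ∈ G'.grading n)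
    (γ : ℝ) (hγ0 : 0 < γ) (N : ℕ) (hN : N = ⌊1 / γ⌋₊)
    (qγ : H →ₗ[ℝ] ℝ) (qγ' : H' →ₗ[ℝ] ℝ)
    (hq1 : qγ 1 = 1) (hq'1 : qγ' 1 = 1)
    -- `α := α' ∘ Φ|_{H₁}` is nonzero, and `q_γ` restricted to `H₁` equals `α`:
    (hrestr : ∀ x ∈ G.grading 1, qγ x = qγ' (Φ x))
    -- defining recursions for `q_γ` on `H`:
    (hmid : ∀ n : ℕ, 2 ≤ n → n ≤ N → ∀ x ∈ G.grading n,
      qγ x = (2 : ℝ) ^ (-(n : ℝ)) * conv qγ qγ x)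
    (hhigh : ∀ n : ℕ, N + 1 ≤ n → ∀ x ∈ G.grading n,
      qγ x = (2 : ℝ) ^ (-(γ * n)) * conv qγ qγ x)
    -- defining recursions for `q'_γ` on `H'`:
    (hmid' : ∀ n : ℕ, 2 ≤ n → n ≤ N → ∀ x ∈ G'.grading n,
      qγ' x = (2 : ℝ) ^ (-(n : ℝ)) * conv qγ' qγ' x)
    (hhigh' : ∀ n : ℕ, N + 1 ≤ n → ∀ x ∈ G'.grading n,
      qγ' x = (2 : ℝ) ^ (-(γ * n)) * conv qγ' qγ' x) :
    ∀ x : H, qγ x = qγ' (Φ x) := by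
  let Ψ : H →ₗc[ℝ] H' := Φ
  have hpull : ∀ n (c : ℝ), (∀ y ∈ G'.grading n, qγ' y = c * conv qγ' qγ' y) →
      ∀ x ∈ G.grading n, (qγ' ∘ₗ Ψ.toLinearMap) x =
        c * conv (qγ' ∘ₗ Ψ.toLinearMap) (qγ' ∘ₗ Ψ.toLinearMap) x := fun n c h x hx => by
    rw [conv_comp_coalgHom]
    exact h (Φ x) (hdeg n x hx)
  have hΨ1 : (qγ' ∘ₗ Ψ.toLinearMap) 1 = 1 := by simp [Ψ, hq'1]
  refine LinearMap.congr_fun (G.linearMap_eq_of_conv_recursion hq1 hΨ1 hrestr fun n hn => ?_)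
  rcases le_or_gt n N with hnN | hnN
  · exact ⟨_, two_mul_two_rpow_neg_ne_one (by exact_mod_cast hn), hmid n hn hnN,
      hpull n _ (hmid' n hn hnN)⟩
  · exact ⟨_, two_mul_two_rpow_neg_ne_one (one_lt_mul_of_floor_one_div_lt hγ0 (hN ▸ hnN)),
      hhigh n hnN, hpull n _ (hhigh' n hnN)⟩

/-- Functoriality of the map `q_γ`: if `Φ : H → H'` is a degree-preserving
Hopf algebra morphism with `α = α' ∘ Φ|_{H₁}`, then `q_γ = q'_γ ∘ Φ`. -/
theorem stmt9 {H H' : Type*} [Ring H] [HopfAlgebra ℝ H] [Ring H'] [HopfAlgebra ℝ H']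
    (G : GradedConnected ℝ H) (G' : GradedConnected ℝ H')
    (Φ : H →ₐc[ℝ] H')
    (hdeg : ∀ n : ℕ, ∀ x ∈ G.grading n, Φ x ∈ G'.grading n)
    (γ : ℝ) (hγ0 : 0 < γ) (hγ1 : γ ≤ 1) (N : ℕ) (hN : N = ⌊1 / γ⌋₊)
    (qγ : H →ₗ[ℝ] ℝ) (qγ' : H' →ₗ[ℝ] ℝ)
    (hq1 : qγ 1 = 1) (hq'1 : qγ' 1 = 1)
    -- `α'` (the restriction of `q'_γ` to `H'₁`) is a nonzero linear map:
    (hα' : ∃ x ∈ G'.grading 1, qγ' x ≠ 0)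
    -- `α := α' ∘ Φ|_{H₁}` is nonzero, and `q_γ` restricted to `H₁` equals `α`:
    (hα : ∃ x ∈ G.grading 1, qγ x ≠ 0)
    (hrestr : ∀ x ∈ G.grading 1, qγ x = qγ' (Φ x))
    -- defining recursions for `q_γ` on `H`:
    (hmid : ∀ n : ℕ, 2 ≤ n → n ≤ N → ∀ x ∈ G.grading n,
      qγ x = (2 : ℝ) ^ (-(n : ℝ)) * conv qγ qγ x)
    (hhigh : ∀ n : ℕ, N + 1 ≤ n → ∀ x ∈ G.grading n,
      qγ x = (2 : ℝ) ^ (-(γ * n)) * conv qγ qγ x)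
    -- defining recursions for `q'_γ` on `H'`:
    (hmid' : ∀ n : ℕ, 2 ≤ n → n ≤ N → ∀ x ∈ G'.grading n,
      qγ' x = (2 : ℝ) ^ (-(n : ℝ)) * conv qγ' qγ' x)
    (hhigh' : ∀ n : ℕ, N + 1 ≤ n → ∀ x ∈ G'.grading n,
      qγ' x = (2 : ℝ) ^ (-(γ * n)) * conv qγ' qγ' x) :
    ∀ x : H, qγ x = qγ' (Φ x) :=
  stmt9_general G G' Φ hdeg γ hγ0 N hN qγ qγ' hq1 hq'1 hrestr hmid hhigh hmid' hhigh'
end
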